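/- For every k ≥ 1 and β ∈ ℝ, ∫_ℝ Φ(β y) y^{2k−1} φ(y) dy = (2^{k−1}(k−1)! β / √(2π(1+β²))) · Σ_{j=0}^{k−1} ((2j−1)!!/(2j)!!) (1+β²)^{−j}. -/

import Mathlib

/-!
Write `Iₙ = ∫ Φ(βy) yⁿ φ(y) dy`. Since `φ'(y) = -y φ(y)`, integration by parts gives
`Iₙ₊₁ = β ∫ yⁿ φ(βy) φ(y) dy + n Iₙ₋₁`. The product `φ(βy) φ(y)` is a centred Gaussian
kernel `(2π)⁻¹ e^{-(1+β²) y²/2}`, so for even `n = 2m` the first integral is the Gaussian moment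
`(2m-1)!! (1+β²)^{-m} / √(2π(1+β²))`. Unrolling the recursion down to `I₁ = β / √(2π(1+β²))`
gives the sum.
-/

open MeasureTheory Real Finset

/-- Standard normal density. -/
noncomputable def stdPdf (x : ℝ) : ℝ := (Real.sqrt (2 * Real.pi))⁻¹ * Real.exp (-x ^ 2 / 2)

/-- Standard normal distribution function. -/
noncomputable def stdCdf (x : ℝ) : ℝ := ∫ t in Set.Iic x, stdPdf t

open ProbabilityTheory

section GaussianKernel

variable {c : ℝ}

theorem integrable_pow_mul_mul_exp_neg_mul_sq (hc : 0 < c) (a : ℝ) (n : ℕ) :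
    Integrable fun x : ℝ => x ^ n * (a * exp (-c * x ^ 2)) := by
  have h := (integrable_rpow_mul_exp_neg_mul_sq hc (s := n)
    (by linarith [n.cast_nonneg (α := ℝ)])).const_mul a
  simp only [rpow_natCast] at h
  exact h.congr (.of_forall fun x => by ring)

theorem hasDerivAt_mul_exp_neg_mul_sq (a c x : ℝ) :
    HasDerivAt (fun y => a * exp (-c * y ^ 2)) (-(2 * c * x) * (a * exp (-c * x ^ 2))) x := by
  have h : HasDerivAt (fun y : ℝ => -c * y ^ 2) (-(2 * c * x)) x := by
    simpa using ((hasDerivAt_pow 2 x).const_mul (-c)).congr_deriv (by ring)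
  exact (h.exp.const_mul a).congr_deriv (by ring)

/-- Stein's identity: integration by parts against `x e^{-cx²} = -(2c)⁻¹ (e^{-cx²})'`. -/
theorem integral_mul_mul_mul_exp_neg_mul_sq (hc : 0 < c) (a : ℝ) {u u' : ℝ → ℝ}
    (hu : ∀ x, HasDerivAt u (u' x) x)
    (huv' : Integrable fun x => u x * (x * (a * exp (-c * x ^ 2))))
    (hu'v : Integrable fun x => u' x * (a * exp (-c * x ^ 2)))
    (huv : Integrable fun x => u x * (a * exp (-c * x ^ 2))) :
    ∫ x, u x * (x * (a * exp (-c * x ^ 2))) = (2 * c)⁻¹ * ∫ x, u' x * (a * exp (-c * x ^ 2)) := by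
  have hc' : 2 * c ≠ 0 := by positivity
  have hv (x : ℝ) : HasDerivAt (fun y => -(2 * c)⁻¹ * (a * exp (-c * y ^ 2)))
      (x * (a * exp (-c * x ^ 2))) x :=
    ((hasDerivAt_mul_exp_neg_mul_sq a c x).const_mul _).congr_deriv (by field_simp)
  rw [integral_mul_deriv_eq_deriv_mul_of_integrable (fun x _ => hu x) (fun x _ => hv x) huv'
    ((hu'v.const_mul (-(2 * c)⁻¹)).congr (.of_forall fun x => by simp only [Pi.mul_apply]; ring))
    ((huv.const_mul (-(2 * c)⁻¹)).congr (.of_forall fun x => by simp only [Pi.mul_apply]; ring)),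
    ← integral_const_mul, ← integral_neg]
  congr 1 with x
  ring

theorem integral_pow_two_mul_mul_exp_neg_mul_sq (hc : 0 < c) (a : ℝ) (m : ℕ) :
    ∫ x, x ^ (2 * m) * (a * exp (-c * x ^ 2)) =
      (∏ i ∈ range m, (2 * (i : ℝ) + 1)) / (2 * c) ^ m * (a * √(π / c)) := by
  induction m with
  | zero =>
    simp only [mul_zero, pow_zero, one_mul, prod_range_zero, div_one]
    rw [integral_const_mul, integral_gaussian]
  | succ m ih =>
    have hu (x : ℝ) : HasDerivAt (fun y : ℝ => y ^ (2 * m + 1)) ((2 * m + 1) * x ^ (2 * m)) x := by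
      simpa using hasDerivAt_pow (2 * m + 1) x
    have h := integral_mul_mul_mul_exp_neg_mul_sq hc a hu
      ((integrable_pow_mul_mul_exp_neg_mul_sq hc a (2 * m + 2)).congr (.of_forall fun x => by ring))
      (((integrable_pow_mul_mul_exp_neg_mul_sq hc a (2 * m)).const_mul (2 * m + 1)).congr
        (.of_forall fun x => by ring))
      ((integrable_pow_mul_mul_exp_neg_mul_sq hc a (2 * m + 1)).congr (.of_forall fun x => by ring))
    simp only [mul_assoc (2 * (m : ℝ) + 1), integral_const_mul, ih] at h
    rw [show 2 * (m + 1) = 2 * m + 2 by ring, prod_range_succ]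
    calc ∫ x, x ^ (2 * m + 2) * (a * exp (-c * x ^ 2))
        = ∫ x, x ^ (2 * m + 1) * (x * (a * exp (-c * x ^ 2))) := by congr 1 with x; ring
      _ = _ := by rw [h]; field_simp; ring

end GaussianKernel

theorem stdPdf_eq_gaussianPDFReal : stdPdf = gaussianPDFReal 0 1 := by
  ext x
  simp [stdPdf, gaussianPDFReal]

theorem stdPdf_eq_mul_exp (x : ℝ) : stdPdf x = (√(2 * π))⁻¹ * exp (-2⁻¹ * x ^ 2) := by
  rw [stdPdf]
  ring_nf

theorem stdPdf_nonneg (x : ℝ) : 0 ≤ stdPdf x :=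
  stdPdf_eq_gaussianPDFReal ▸ gaussianPDFReal_nonneg 0 1 x

theorem integrable_stdPdf : Integrable stdPdf :=
  stdPdf_eq_gaussianPDFReal ▸ integrable_gaussianPDFReal 0 1

theorem integral_stdPdf : ∫ x, stdPdf x = 1 :=
  stdPdf_eq_gaussianPDFReal ▸ integral_gaussianPDFReal_eq_one 0 one_ne_zero

theorem continuous_stdPdf : Continuous stdPdf := by
  unfold stdPdf
  fun_prop

theorem integrable_pow_mul_stdPdf (n : ℕ) : Integrable fun x : ℝ => x ^ n * stdPdf x := by
  simpa only [stdPdf_eq_mul_exp] using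
    integrable_pow_mul_mul_exp_neg_mul_sq (by norm_num : (0 : ℝ) < 2⁻¹) _ n

theorem integral_mul_mul_stdPdf {u u' : ℝ → ℝ} (hu : ∀ x, HasDerivAt u (u' x) x)
    (huv' : Integrable fun x => u x * (x * stdPdf x))
    (hu'v : Integrable fun x => u' x * stdPdf x)
    (huv : Integrable fun x => u x * stdPdf x) :
    ∫ x, u x * (x * stdPdf x) = ∫ x, u' x * stdPdf x := by
  simp only [stdPdf_eq_mul_exp] at huv' hu'v huv ⊢
  simpa using integral_mul_mul_mul_exp_neg_mul_sq (by norm_num) _ hu huv' hu'v huv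

theorem hasDerivAt_stdCdf (x : ℝ) : HasDerivAt stdCdf (stdPdf x) x := by
  have hΦ : stdCdf = fun y => stdCdf 0 + ∫ t in (0 : ℝ)..y, stdPdf t := by
    ext y
    rw [← intervalIntegral.integral_Iic_sub_Iic integrable_stdPdf.integrableOn
      integrable_stdPdf.integrableOn, stdCdf, stdCdf]
    ring
  rw [hΦ]
  exact ((continuous_stdPdf.integral_hasStrictDerivAt 0 x).hasDerivAt).const_add _

theorem continuous_stdCdf : Continuous stdCdf :=
  continuous_iff_continuousAt.2 fun x => (hasDerivAt_stdCdf x).continuousAt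

theorem stdCdf_mem_Icc (x : ℝ) : stdCdf x ∈ Set.Icc 0 1 := by
  refine ⟨setIntegral_nonneg measurableSet_Iic fun t _ => stdPdf_nonneg t, ?_⟩
  calc stdCdf x ≤ ∫ t, stdPdf t :=
        setIntegral_le_integral integrable_stdPdf (.of_forall stdPdf_nonneg)
    _ = 1 := integral_stdPdf

theorem integrable_stdCdf_mul_pow_mul_stdPdf (β : ℝ) (n : ℕ) :
    Integrable fun y => stdCdf (β * y) * y ^ n * stdPdf y := by
  refine ((integrable_pow_mul_stdPdf n).bdd_mul (f := fun y => stdCdf (β * y)) (c := 1)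
    (continuous_stdCdf.comp (continuous_const_mul β)).aestronglyMeasurable
    (.of_forall fun y => ?_)).congr (.of_forall fun y => by ring)
  obtain ⟨h0, h1⟩ := stdCdf_mem_Icc (β * y)
  rwa [norm_of_nonneg h0]

theorem stdPdf_mul_stdPdf (β y : ℝ) :
    stdPdf (β * y) * stdPdf y = (2 * π)⁻¹ * exp (-((1 + β ^ 2) / 2) * y ^ 2) := by
  rw [stdPdf, stdPdf, mul_mul_mul_comm, ← exp_add, ← mul_inv,
    mul_self_sqrt (by positivity)]
  ring_nf

theorem integrable_pow_mul_stdPdf_mul_stdPdf (β : ℝ) (n : ℕ) :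
    Integrable fun y => y ^ n * (stdPdf (β * y) * stdPdf y) := by
  simpa only [stdPdf_mul_stdPdf] using
    integrable_pow_mul_mul_exp_neg_mul_sq (by positivity : 0 < (1 + β ^ 2) / 2) _ n

theorem integral_pow_two_mul_mul_stdPdf_mul_stdPdf (β : ℝ) (m : ℕ) :
    ∫ y, y ^ (2 * m) * (stdPdf (β * y) * stdPdf y) =
      (∏ i ∈ range m, (2 * (i : ℝ) + 1)) / (1 + β ^ 2) ^ m / √(2 * π * (1 + β ^ 2)) := by
  have ha : 0 < 1 + β ^ 2 := by positivity
  simp only [stdPdf_mul_stdPdf]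
  rw [integral_pow_two_mul_mul_exp_neg_mul_sq (by positivity) _ m,
    show π / ((1 + β ^ 2) / 2) = 2 * π / (1 + β ^ 2) by field_simp, sqrt_div' _ ha.le,
    sqrt_mul' _ ha.le]
  field_simp
  exact sq_sqrt (by positivity)

-- For `n = 0` the truncated `n - 1` is harmless: its term carries the factor `n`.
theorem integral_stdCdf_mul_pow_succ_mul_stdPdf (β : ℝ) (n : ℕ) :
    ∫ y, stdCdf (β * y) * y ^ (n + 1) * stdPdf y =
      β * (∫ y, y ^ n * (stdPdf (β * y) * stdPdf y)) +
        n * ∫ y, stdCdf (β * y) * y ^ (n - 1) * stdPdf y := by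
  have hu (y : ℝ) : HasDerivAt (fun y => stdCdf (β * y) * y ^ n)
      (β * stdPdf (β * y) * y ^ n + stdCdf (β * y) * (n * y ^ (n - 1))) y := by
    have hΦ : HasDerivAt (fun y => stdCdf (β * y)) (β * stdPdf (β * y)) y := by
      have hβ : HasDerivAt (fun y => β * y) β y := by simpa using (hasDerivAt_id y).const_mul β
      exact ((hasDerivAt_stdCdf (β * y)).comp y hβ).congr_deriv (mul_comm _ _)
    exact hΦ.mul (hasDerivAt_pow n y)
  have hJ := integrable_pow_mul_stdPdf_mul_stdPdf β n
  have hI := integrable_stdCdf_mul_pow_mul_stdPdf β (n - 1)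
  calc ∫ y, stdCdf (β * y) * y ^ (n + 1) * stdPdf y
      = ∫ y, stdCdf (β * y) * y ^ n * (y * stdPdf y) := by congr 1 with y; ring
    _ = ∫ y, (β * stdPdf (β * y) * y ^ n + stdCdf (β * y) * (n * y ^ (n - 1))) * stdPdf y :=
      integral_mul_mul_stdPdf hu
        ((integrable_stdCdf_mul_pow_mul_stdPdf β (n + 1)).congr (.of_forall fun y => by ring))
        (((hJ.const_mul β).add (hI.const_mul n)).congr
          (.of_forall fun y => by simp only [Pi.add_apply]; ring))
        (integrable_stdCdf_mul_pow_mul_stdPdf β n)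
    _ = ∫ y, β * (y ^ n * (stdPdf (β * y) * stdPdf y)) +
          n * (stdCdf (β * y) * y ^ (n - 1) * stdPdf y) := by congr 1 with y; ring
    _ = _ := by
      rw [integral_add (hJ.const_mul β) (hI.const_mul n), integral_const_mul, integral_const_mul]

theorem integral_stdCdf_mul_pow_two_mul_add_one_mul_stdPdf (β : ℝ) (m : ℕ) :
    ∫ y, stdCdf (β * y) * y ^ (2 * m + 1) * stdPdf y =
      (2 ^ m * (m.factorial : ℝ) * β / √(2 * π * (1 + β ^ 2))) *
        ∑ j ∈ range (m + 1),
          ((∏ i ∈ range j, (2 * (i : ℝ) + 1)) / (2 ^ j * (j.factorial : ℝ))) *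
            ((1 + β ^ 2) ^ j)⁻¹ := by
  have hJ := integral_pow_two_mul_mul_stdPdf_mul_stdPdf β
  induction m with
  | zero =>
    have hJ0 := hJ 0
    simp only [mul_zero, pow_zero, one_mul, prod_range_zero] at hJ0
    simpa [hJ0, div_eq_mul_inv] using integral_stdCdf_mul_pow_succ_mul_stdPdf β 0
  | succ m ih =>
    rw [show 2 * (m + 1) + 1 = 2 * m + 2 + 1 by ring, integral_stdCdf_mul_pow_succ_mul_stdPdf,
      show 2 * m + 2 = 2 * (m + 1) by ring, hJ, show 2 * (m + 1) - 1 = 2 * m + 1 by omega, ih,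
      sum_range_succ _ (m + 1)]
    have : √(2 * π * (1 + β ^ 2)) ≠ 0 := by positivity
    push_cast [Nat.factorial_succ]
    field_simp
    ring

/-- For `k ≥ 1` and `β ∈ ℝ`,
`∫_ℝ Φ(β y) y^{2k-1} φ(y) dy
  = (2^{k-1}(k-1)! β / √(2π(1+β²))) Σ_{j=0}^{k-1} ((2j-1)!!/(2j)!!)(1+β²)^{-j}`. -/
theorem integral_cdf_mul_odd_pow_mul_pdf (k : ℕ) (hk : 1 ≤ k) (β : ℝ) :
    ∫ y : ℝ, stdCdf (β * y) * y ^ (2 * k - 1) * stdPdf y =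
      (2 ^ (k - 1) * (Nat.factorial (k - 1) : ℝ) * β /
        Real.sqrt (2 * Real.pi * (1 + β ^ 2))) *
      ∑ j ∈ Finset.range k,
        ((∏ i ∈ Finset.range j, (2 * (i : ℝ) + 1)) / (2 ^ j * (Nat.factorial j : ℝ))) *
          ((1 + β ^ 2) ^ j)⁻¹ := by
  obtain ⟨m, rfl⟩ : ∃ m, k = m + 1 := ⟨k - 1, by omega⟩
  rw [show 2 * (m + 1) - 1 = 2 * m + 1 by omega, Nat.add_sub_cancel]
  exact integral_stdCdf_mul_pow_two_mul_add_one_mul_stdPdf β m
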